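/- arXiv:1712.01964 — 6 statements merged into one kernel-verified Lean document; each statement's English description precedes it below -/
import Mathlib

section
/- The Bing space B is a Hausdorff topological space. -/
/-- A point of the Bing space: a rational pair `(x, y)` with `0 ≤ y`. -/
structure BingPt where
  x : ℚ
  y : ℚ
  hy : 0 ≤ y

/-- The pair of base "intervals" attached to the point `(a,b)`:
rational points `(x,0)` with `|x - (a - b/√3)| < ε` or `|x - (a + b/√3)| < ε`. -/
def wedge (a b : ℚ) (ε : ℝ) : Set BingPt :=
  {z : BingPt | z.y = 0 ∧ (|(z.x : ℝ) - ((a : ℝ) - (b : ℝ) / Real.sqrt 3)| < ε ∨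
    |(z.x : ℝ) - ((a : ℝ) + (b : ℝ) / Real.sqrt 3)| < ε)}

/-- A set `U` is Bing-open if each of its points `(a,b)` admits `ε > 0`
with the corresponding base intervals contained in `U`. -/
def BingOpen (U : Set BingPt) : Prop :=
  ∀ z ∈ U, ∃ ε : ℝ, 0 < ε ∧ wedge z.x z.y ε ⊆ U

/-- The Bing topology. -/
instance : TopologicalSpace BingPt where
  IsOpen := BingOpen
  isOpen_univ := fun _ _ => ⟨1, one_pos, fun _ _ => trivial⟩
  isOpen_inter := by
    intro U V hU hV z hz
    obtain ⟨ε1, hε1, h1⟩ := hU z hz.1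
    obtain ⟨ε2, hε2, h2⟩ := hV z hz.2
    refine ⟨min ε1 ε2, lt_min hε1 hε2, fun w hw => ⟨h1 ⟨hw.1, ?_⟩, h2 ⟨hw.1, ?_⟩⟩⟩
    · exact hw.2.imp (fun h => h.trans_le (min_le_left _ _)) (fun h => h.trans_le (min_le_left _ _))
    · exact hw.2.imp (fun h => h.trans_le (min_le_right _ _)) (fun h => h.trans_le (min_le_right _ _))
  isOpen_sUnion := by
    intro S hS z hz
    obtain ⟨U, hU, hzU⟩ := hz
    obtain ⟨ε, hε, h⟩ := hS U hU z hzU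
    exact ⟨ε, hε, fun w hw => ⟨U, hU, h hw⟩⟩

/-! Attach to each point `z = (x, y)` its "feet" `x ∓ y/√3`, the base vertices on the real line
of the equilateral triangle with apex `z`, so that a basic neighbourhood of `z` is `z` plus the
rational base points in an `ε`-thickening of its feet. Since `√3` is irrational, distinct points
have disjoint finite sets of feet, and these have disjoint `ε`-thickenings for some `ε > 0`; the
corresponding basic neighbourhoods are then disjoint, because every point of a basic
neighbourhood of `z` has its own feet inside the thickening of those of `z`.
-/

open Set Metric

theorem Irrational.ratCast_add_ratCast_div_inj {α : ℝ} (hα : Irrational α) {q r q' r' : ℚ}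
    (h : (q : ℝ) + r / α = q' + r' / α) : q = q' ∧ r = r' := by
  by_cases hr : r = r'
  · subst hr
    exact ⟨by exact_mod_cast add_right_cancel h, rfl⟩
  · have key : (r : ℝ) - r' = (q' - q) * α := by
      have := hα.ne_zero
      field_simp at h
      linarith
    have hq : (q' : ℝ) - q ≠ 0 := by
      rintro hq
      rw [hq, zero_mul, sub_eq_zero] at key
      exact hr (mod_cast key)
    refine absurd ⟨(r - r') / (q' - q), ?_⟩ hα
    push_cast
    rw [key, mul_div_cancel_left₀ _ hq]

theorem irrational_sqrt_three : Irrational √3 := by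
  simpa using Nat.prime_three.irrational_sqrt

namespace BingPt

attribute [ext] BingPt

def feet (z : BingPt) : Set ℝ := {(z.x : ℝ) - z.y / √3, (z.x : ℝ) + z.y / √3}

theorem feet_finite (z : BingPt) : z.feet.Finite := by
  simp [feet]

theorem feet_nonempty (z : BingPt) : z.feet.Nonempty := insert_nonempty _ _

theorem feet_of_y_eq_zero {z : BingPt} (h : z.y = 0) : z.feet = {(z.x : ℝ)} := by
  simp [feet, h]

theorem mem_wedge_iff {z p : BingPt} {ε : ℝ} :
    p ∈ wedge z.x z.y ε ↔ p.y = 0 ∧ (p.x : ℝ) ∈ thickening ε z.feet := by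
  simp [wedge, feet, mem_thickening_iff, Real.dist_eq]

theorem disjoint_feet {z w : BingPt} (h : z ≠ w) : Disjoint z.feet w.feet := by
  contrapose! h
  obtain ⟨f, hfz, hfw⟩ := not_disjoint_iff.1 h
  have hz := z.hy
  have hw := w.hy
  simp only [feet, mem_insert_iff, mem_singleton_iff] at hfz hfw
  have key : ∀ {r r' : ℚ}, (z.x : ℝ) + r / √3 = w.x + r' / √3 → z.x = w.x ∧ r = r' :=
    irrational_sqrt_three.ratCast_add_ratCast_div_inj
  rcases hfz with rfl | rfl <;> rcases hfw with h | h
  · obtain ⟨hx, hy⟩ := key (r := -z.y) (r' := -w.y) (by push_cast [neg_div]; linarith)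
    ext <;> linarith
  · obtain ⟨hx, hy⟩ := key (r := -z.y) (r' := w.y) (by push_cast [neg_div]; linarith)
    ext <;> linarith
  · obtain ⟨hx, hy⟩ := key (r := z.y) (r' := -w.y) (by push_cast [neg_div]; linarith)
    ext <;> linarith
  · obtain ⟨hx, hy⟩ := key h
    ext <;> linarith

theorem isOpen_insert_wedge (z : BingPt) {ε : ℝ} (hε : 0 < ε) :
    IsOpen (insert z (wedge z.x z.y ε)) := by
  rintro w (rfl | hw)
  · exact ⟨ε, hε, subset_insert _ _⟩
  obtain ⟨hy, hx⟩ := mem_wedge_iff.1 hw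
  obtain ⟨δ, hδ, hball⟩ := Metric.isOpen_iff.1 isOpen_thickening _ hx
  refine ⟨δ, hδ, fun p hp => Or.inr (mem_wedge_iff.2 ⟨(mem_wedge_iff.1 hp).1, hball ?_⟩)⟩
  simpa [feet_of_y_eq_zero hy, thickening_singleton] using (mem_wedge_iff.1 hp).2

theorem feet_subset_thickening {z p : BingPt} {ε : ℝ} (hε : 0 < ε)
    (hp : p ∈ insert z (wedge z.x z.y ε)) : p.feet ⊆ thickening ε z.feet := by
  rcases hp with rfl | hp
  · exact self_subset_thickening hε _
  · obtain ⟨hy, hx⟩ := mem_wedge_iff.1 hp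
    simpa [feet_of_y_eq_zero hy] using hx

end BingPt

/-- The Bing space is Hausdorff. -/
theorem bing_t2 : T2Space BingPt := by
  refine ⟨fun z w hzw => ?_⟩
  obtain ⟨ε, hε, hdisj⟩ := (BingPt.disjoint_feet hzw).exists_thickenings
    z.feet_finite.isCompact w.feet_finite.isClosed
  refine ⟨_, _, z.isOpen_insert_wedge hε, w.isOpen_insert_wedge hε, mem_insert _ _,
    mem_insert _ _, disjoint_left.2 fun p hpz hpw => ?_⟩
  obtain ⟨f, hf⟩ := p.feet_nonempty
  exact disjoint_left.1 hdisj (BingPt.feet_subset_thickening hε hpz hf)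
    (BingPt.feet_subset_thickening hε hpw hf)
end

section
/- The Bing space B is connected. -/
lemma sqrt3_pos : (0:ℝ) < Real.sqrt 3 := Real.sqrt_pos.2 (by norm_num)

/-- Every nonempty Bing-open set contains a full rational interval on the axis. -/
lemma exists_base (U : Set BingPt) (hU : BingOpen U) (hne : U.Nonempty) :
    ∃ (p : ℚ) (ε : ℝ), 0 < ε ∧ ∀ x : ℚ, |(x:ℝ) - p| < ε → (⟨x, 0, le_rfl⟩ : BingPt) ∈ U := by
  obtain ⟨z, hz⟩ := hne
  obtain ⟨ε, hε, hsub⟩ := hU z hz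
  obtain ⟨f, hf⟩ : ∃ f : ℝ, f = (z.x : ℝ) - (z.y : ℝ) / Real.sqrt 3 := ⟨_, rfl⟩
  obtain ⟨x0, hx1, hx2⟩ := exists_rat_btwn (show f < f + ε by linarith)
  have hx0U : (⟨x0, 0, le_rfl⟩ : BingPt) ∈ U := by
    apply hsub
    refine ⟨rfl, Or.inl ?_⟩
    rw [abs_lt]
    dsimp only
    constructor <;> linarith [hf]
  obtain ⟨ε', hε', hsub'⟩ := hU _ hx0U
  refine ⟨x0, ε', hε', fun x hx => hsub' ⟨rfl, Or.inl ?_⟩⟩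
  simpa using hx

/-- A point lies in the closure of `U` as soon as one of its two "feet" lies in a
rational interval fully contained in `U`. -/
lemma mem_closure_of_foot (U : Set BingPt) (p : ℚ) (ε : ℝ)
    (hbase : ∀ x : ℚ, |(x:ℝ) - p| < ε → (⟨x, 0, le_rfl⟩ : BingPt) ∈ U)
    (z : BingPt)
    (h : |((z.x:ℝ) - (z.y:ℝ) / Real.sqrt 3) - p| < ε ∨
      |((z.x:ℝ) + (z.y:ℝ) / Real.sqrt 3) - p| < ε) :
    z ∈ closure U := by
  rw [mem_closure_iff]
  intro W hW hzW
  obtain ⟨η, hη, hsub⟩ := (hW : BingOpen W) z hzW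
  rcases h with h | h
  · obtain ⟨f, hf⟩ : ∃ f : ℝ, f = (z.x:ℝ) - (z.y:ℝ) / Real.sqrt 3 := ⟨_, rfl⟩
    rcases abs_lt.1 h with ⟨h1, h2⟩
    obtain ⟨x, hx1, hx2⟩ := exists_rat_btwn
      (show max (f - η) ((p:ℝ) - ε) < min (f + η) ((p:ℝ) + ε) by
        rw [max_lt_iff, lt_min_iff, lt_min_iff]
        refine ⟨⟨by linarith, by linarith⟩, by linarith, by linarith⟩)
    have ha : f - η < (x:ℝ) := lt_of_le_of_lt (le_max_left _ _) hx1
    have hb : (p:ℝ) - ε < (x:ℝ) := lt_of_le_of_lt (le_max_right _ _) hx1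
    have hc : (x:ℝ) < f + η := lt_of_lt_of_le hx2 (min_le_left _ _)
    have hd : (x:ℝ) < (p:ℝ) + ε := lt_of_lt_of_le hx2 (min_le_right _ _)
    refine ⟨⟨x, 0, le_rfl⟩, hsub ⟨rfl, Or.inl ?_⟩, hbase x (abs_lt.2 ⟨by linarith, by linarith⟩)⟩
    exact abs_lt.2 ⟨by dsimp only; linarith [hf], by dsimp only; linarith [hf]⟩
  · obtain ⟨f, hf⟩ : ∃ f : ℝ, f = (z.x:ℝ) + (z.y:ℝ) / Real.sqrt 3 := ⟨_, rfl⟩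
    rcases abs_lt.1 h with ⟨h1, h2⟩
    obtain ⟨x, hx1, hx2⟩ := exists_rat_btwn
      (show max (f - η) ((p:ℝ) - ε) < min (f + η) ((p:ℝ) + ε) by
        rw [max_lt_iff, lt_min_iff, lt_min_iff]
        refine ⟨⟨by linarith, by linarith⟩, by linarith, by linarith⟩)
    have ha : f - η < (x:ℝ) := lt_of_le_of_lt (le_max_left _ _) hx1
    have hb : (p:ℝ) - ε < (x:ℝ) := lt_of_le_of_lt (le_max_right _ _) hx1
    have hc : (x:ℝ) < f + η := lt_of_lt_of_le hx2 (min_le_left _ _)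
    have hd : (x:ℝ) < (p:ℝ) + ε := lt_of_lt_of_le hx2 (min_le_right _ _)
    refine ⟨⟨x, 0, le_rfl⟩, hsub ⟨rfl, Or.inr ?_⟩, hbase x (abs_lt.2 ⟨by linarith, by linarith⟩)⟩
    exact abs_lt.2 ⟨by dsimp only; linarith [hf], by dsimp only; linarith [hf]⟩

/-- Closures of any two nonempty open sets of the Bing space intersect. -/
lemma closures_intersect (U V : Set BingPt) (hU : IsOpen U) (hV : IsOpen V)
    (hUne : U.Nonempty) (hVne : V.Nonempty) : (closure U ∩ closure V).Nonempty := by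
  obtain ⟨p, ε, hε, hp⟩ := exists_base U hU hUne
  obtain ⟨q, δ, hδ, hq⟩ := exists_base V hV hVne
  set m : ℝ := min ε δ with hm
  have hm0 : 0 < m := lt_min hε hδ
  have hs3 : (0:ℝ) < Real.sqrt 3 := sqrt3_pos
  set s : ℚ := |q - p| with hs
  set a : ℚ := (p + q) / 2 with ha
  have hs0 : (0:ℝ) ≤ (s:ℝ) := by
    have : (0:ℚ) ≤ s := abs_nonneg _
    exact_mod_cast this
  obtain ⟨b, hb1, hb2⟩ := exists_rat_btwn
    (show Real.sqrt 3 * (s:ℝ) / 2 < Real.sqrt 3 * (s:ℝ) / 2 + Real.sqrt 3 * m by nlinarith)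
  have hb0 : (0:ℚ) ≤ b := by
    have : (0:ℝ) ≤ (b:ℝ) := le_of_lt (lt_of_le_of_lt (by positivity) hb1)
    exact_mod_cast this
  have hkey : |(b:ℝ) / Real.sqrt 3 - (s:ℝ) / 2| < m := by
    have h1 : (s:ℝ) / 2 < (b:ℝ) / Real.sqrt 3 := by
      rw [lt_div_iff₀ hs3]; nlinarith
    have h2 : (b:ℝ) / Real.sqrt 3 < (s:ℝ) / 2 + m := by
      rw [div_lt_iff₀ hs3]; nlinarith
    rw [abs_lt]; constructor <;> linarith
  set z : BingPt := ⟨a, b, hb0⟩ with hz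
  have hzx : (z.x : ℝ) = ((p:ℝ) + (q:ℝ)) / 2 := by
    rw [show z.x = (p + q) / 2 from rfl]; push_cast; ring
  have hzy : (z.y : ℝ) = (b:ℝ) := rfl
  have hmε : m ≤ ε := min_le_left _ _
  have hmδ : m ≤ δ := min_le_right _ _
  rcases le_total p q with hpq | hpq
  · have hsval : (s:ℝ) = (q:ℝ) - (p:ℝ) := by
      rw [hs, abs_of_nonneg (by linarith : (0:ℚ) ≤ q - p)]; push_cast; ring
    refine ⟨z, mem_closure_of_foot U p ε hp z (Or.inl ?_),
      mem_closure_of_foot V q δ hq z (Or.inr ?_)⟩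
    · rw [hzx, hzy]
      have : ((p:ℝ) + (q:ℝ)) / 2 - (b:ℝ) / Real.sqrt 3 - (p:ℝ)
          = -(((b:ℝ) / Real.sqrt 3) - (s:ℝ)/2) := by rw [hsval]; ring
      rw [this, abs_neg]
      exact lt_of_lt_of_le hkey hmε
    · rw [hzx, hzy]
      have : ((p:ℝ) + (q:ℝ)) / 2 + (b:ℝ) / Real.sqrt 3 - (q:ℝ)
          = ((b:ℝ) / Real.sqrt 3) - (s:ℝ)/2 := by rw [hsval]; ring
      rw [this]
      exact lt_of_lt_of_le hkey hmδ
  · have hsval : (s:ℝ) = (p:ℝ) - (q:ℝ) := by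
      rw [hs, abs_of_nonpos (by linarith : q - p ≤ (0:ℚ))]; push_cast; ring
    refine ⟨z, mem_closure_of_foot U p ε hp z (Or.inr ?_),
      mem_closure_of_foot V q δ hq z (Or.inl ?_)⟩
    · rw [hzx, hzy]
      have : ((p:ℝ) + (q:ℝ)) / 2 + (b:ℝ) / Real.sqrt 3 - (p:ℝ)
          = ((b:ℝ) / Real.sqrt 3) - (s:ℝ)/2 := by rw [hsval]; ring
      rw [this]
      exact lt_of_lt_of_le hkey hmε
    · rw [hzx, hzy]
      have : ((p:ℝ) + (q:ℝ)) / 2 - (b:ℝ) / Real.sqrt 3 - (q:ℝ)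
          = -(((b:ℝ) / Real.sqrt 3) - (s:ℝ)/2) := by rw [hsval]; ring
      rw [this, abs_neg]
      exact lt_of_lt_of_le hkey hmδ

/-- The Bing space is connected. -/
theorem bing_connected : ConnectedSpace BingPt := by
  refine { toNonempty := ⟨⟨0, 0, le_rfl⟩⟩, toPreconnectedSpace := ⟨?_⟩ }
  intro u v hu hv hcov ⟨x, _, hxu⟩ ⟨y, _, hyv⟩
  obtain ⟨w, hwu, hwv⟩ := closures_intersect u v hu hv ⟨x, hxu⟩ ⟨y, hyv⟩
  rcases hcov (Set.mem_univ w) with hw | hw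
  · obtain ⟨t, htu, htv⟩ := mem_closure_iff.1 hwv u hu hw
    exact ⟨t, Set.mem_univ t, htu, htv⟩
  · obtain ⟨t, htv, htu⟩ := mem_closure_iff.1 hwu v hv hw
    exact ⟨t, Set.mem_univ t, htu, htv⟩
end

section
/- For any rational numbers a > 0 and b, the affine map f : B → B, f(x,y) = (a·x + b, a·y), is a homeomorphism of the Bing space B. -/
/-! The map `(x, y) ↦ (a x + b, a y)` carries the base points `x ∓ y/√3` of a point to the base
points of its image and multiplies distances by `a`, so it maps base intervals of radius `ε` into
base intervals of radius `a ε`; hence it is continuous, and so is its inverse, the affine map with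
ratio `a⁻¹`. -/

namespace BingPt

def affine (a b : ℚ) (ha : 0 ≤ a) (z : BingPt) : BingPt :=
  ⟨a * z.x + b, a * z.y, mul_nonneg ha z.hy⟩

theorem affine_inv_affine (a b : ℚ) (ha : 0 < a) (z : BingPt) :
    affine a⁻¹ (-b / a) (inv_nonneg.mpr ha.le) (affine a b ha.le z) = z := by
  obtain ⟨x, y, hy⟩ := z
  simp only [affine, mk.injEq]
  grind

theorem affine_affine_inv (a b : ℚ) (ha : 0 < a) (z : BingPt) :
    affine a b ha.le (affine a⁻¹ (-b / a) (inv_nonneg.mpr ha.le) z) = z := by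
  obtain ⟨x, y, hy⟩ := z
  simp only [affine, mk.injEq]
  grind

theorem mapsTo_affine_wedge (a b : ℚ) (ha : 0 < a) (x y : ℚ) (ε : ℝ) :
    Set.MapsTo (affine a b ha.le) (wedge x y ε) (wedge (a * x + b) (a * y) (a * ε)) := by
  rintro w ⟨hwy, hwx⟩
  have ha' : (0 : ℝ) < a := by exact_mod_cast ha
  have scale : ∀ c : ℝ, |((a * w.x + b : ℚ) : ℝ) - ((a * x + b : ℚ) + (a * y : ℚ) * c)|
      = a * |(w.x : ℝ) - (x + y * c)| := by
    intro c
    have factor : ((a * w.x + b : ℚ) : ℝ) - ((a * x + b : ℚ) + (a * y : ℚ) * c)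
        = a * ((w.x : ℝ) - (x + y * c)) := by
      push_cast
      ring
    rw [factor, abs_mul, abs_of_pos ha']
  refine ⟨by simp [affine, hwy], ?_⟩
  have h := scale (-(1 / Real.sqrt 3))
  have h' := scale (1 / Real.sqrt 3)
  simp only [mul_neg, ← sub_eq_add_neg, mul_one_div] at h h'
  simp only [affine, h, h']
  exact hwx.imp (mul_lt_mul_of_pos_left · ha') (mul_lt_mul_of_pos_left · ha')

theorem continuous_affine (a b : ℚ) (ha : 0 < a) : Continuous (affine a b ha.le) := by
  have ha' : (0 : ℝ) < a := by exact_mod_cast ha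
  rw [continuous_def]
  intro U hU z hz
  obtain ⟨ε, hε, hsub⟩ := hU _ hz
  refine ⟨ε / a, div_pos hε ha', fun w hw => hsub ?_⟩
  have h := mapsTo_affine_wedge a b ha z.x z.y (ε / a) hw
  rwa [mul_div_cancel₀ ε ha'.ne'] at h

def affineHomeomorph (a b : ℚ) (ha : 0 < a) : BingPt ≃ₜ BingPt where
  toFun := affine a b ha.le
  invFun := affine a⁻¹ (-b / a) (inv_nonneg.mpr ha.le)
  left_inv := affine_inv_affine a b ha
  right_inv := affine_affine_inv a b ha
  continuous_toFun := continuous_affine a b ha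
  continuous_invFun := continuous_affine a⁻¹ (-b / a) (inv_pos.mpr ha)

end BingPt

/-- For rationals `a > 0` and `b`, the affine map `(x,y) ↦ (a·x + b, a·y)` is a
homeomorphism of the Bing space. -/
theorem bing_affine_homeo (a b : ℚ) (ha : 0 < a) :
    ∃ h : BingPt ≃ₜ BingPt, ∀ z : BingPt, (h z).x = a * z.x + b ∧ (h z).y = a * z.y :=
  ⟨BingPt.affineHomeomorph a b ha, fun _ => ⟨rfl, rfl⟩⟩
end

section
/- The Bing space B is not regular: there exists a point and a closed set not containing it that cannot be separated by disjoint open sets. -/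
/-!
The base neighbourhoods of every point are intervals of the `x`-axis, so any set containing the
axis is open and the line `y = 1` is closed. An open set around `(a, 0)` contains an interval
around `a` on the axis, while an open set around the line `y = 1` contains, for each of its points
`(q, 1)`, an interval around `q - 1/√3`. Taking `q` rational close to `a + 1/√3` makes these two
intervals overlap, and they share a rational point.
-/

namespace BingPt

def axisPt (r : ℚ) : BingPt := ⟨r, 0, le_rfl⟩

lemma isOpen_of_forall_y_eq_zero_mem {U : Set BingPt} (hU : ∀ w : BingPt, w.y = 0 → w ∈ U) :
    IsOpen U :=
  fun _ _ => ⟨1, one_pos, fun w hw => hU w hw.1⟩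

lemma isClosed_of_forall_y_ne_zero {C : Set BingPt} (hC : ∀ w ∈ C, w.y ≠ 0) : IsClosed C :=
  isOpen_compl_iff.1 <| isOpen_of_forall_y_eq_zero_mem fun w hw hwC => hC w hwC hw

lemma axisPt_mem_wedge {r a b : ℚ} {ε : ℝ} (h : |(r : ℝ) - (a - b / √3)| < ε) :
    axisPt r ∈ wedge a b ε :=
  ⟨rfl, Or.inl h⟩

end BingPt

lemma exists_rat_abs_sub_lt_and_abs_sub_lt {c c' ε δ : ℝ} (hcc' : |c - c'| < ε) (hδ : 0 < δ) :
    ∃ r : ℚ, |(r : ℝ) - c| < ε ∧ |(r : ℝ) - c'| < δ := by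
  obtain ⟨r, hr⟩ := exists_rat_near c' (lt_min hδ (sub_pos.2 hcc'))
  rw [abs_sub_comm] at hr
  refine ⟨r, ?_, hr.trans_le (min_le_left _ _)⟩
  calc |(r : ℝ) - c| ≤ |(r : ℝ) - c'| + |c' - c| := abs_sub_le _ _ _
    _ < (ε - |c - c'|) + |c - c'| := by
      rw [abs_sub_comm c']; gcongr; exact hr.trans_le (min_le_right _ _)
    _ = ε := sub_add_cancel _ _

open BingPt in
lemma wedge_inter_nonempty {a b a' b' : ℚ} {ε δ : ℝ}
    (h : |((a : ℝ) - b / √3) - (a' - b' / √3)| < ε) (hδ : 0 < δ) :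
    (wedge a b ε ∩ wedge a' b' δ).Nonempty :=
  let ⟨r, hr, hr'⟩ := exists_rat_abs_sub_lt_and_abs_sub_lt h hδ
  ⟨axisPt r, axisPt_mem_wedge hr, axisPt_mem_wedge hr'⟩

open BingPt in
lemma not_separatedNhds_axisPt_setOf_y_eq (a : ℚ) {b : ℚ} (hb : 0 < b) :
    ¬ SeparatedNhds {axisPt a} {w : BingPt | w.y = b} := by
  rintro ⟨U, V, hU, hV, haU, hCV, hUV⟩
  obtain ⟨ε, hε, hεU⟩ := hU _ (haU rfl)
  obtain ⟨q, hq⟩ := exists_rat_near ((a : ℝ) + b / √3) hε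
  obtain ⟨δ, hδ, hδV⟩ := hV ⟨q, b, hb.le⟩ (hCV rfl)
  have hclose : |((a : ℝ) - (0 : ℚ) / √3) - (q - b / √3)| < ε := by
    rwa [show ((a : ℝ) - (0 : ℚ) / √3) - (q - b / √3) = a + b / √3 - q by push_cast; ring]
  obtain ⟨w, hwU, hwV⟩ := wedge_inter_nonempty hclose hδ
  exact Set.disjoint_left.1 hUV (hεU hwU) (hδV hwV)

/-- The Bing space is not regular: some point and closed set not containing it cannot
be separated by disjoint open sets. -/
theorem bing_not_regular :
    ¬ RegularSpace BingPt ∧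
    ∃ (z : BingPt) (C : Set BingPt), IsClosed C ∧ z ∉ C ∧
      ¬ ∃ U V : Set BingPt, IsOpen U ∧ IsOpen V ∧ z ∈ U ∧ C ⊆ V ∧ Disjoint U V := by
  set C := {w : BingPt | w.y = 1}
  have hC : IsClosed C := BingPt.isClosed_of_forall_y_ne_zero fun _ hw => hw ▸ one_ne_zero
  have hzC : BingPt.axisPt 0 ∉ C := zero_ne_one
  have hsep := not_separatedNhds_axisPt_setOf_y_eq 0 one_pos
  refine ⟨fun _ => hsep (.of_isCompact_isClosed isCompact_singleton hC
    (Set.disjoint_singleton_left.2 hzC)), _, C, hC, hzC, ?_⟩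
  rintro ⟨U, V, hU, hV, hzU, hCV, hUV⟩
  exact hsep ⟨U, V, hU, hV, Set.singleton_subset_iff.2 hzU, hCV, hUV⟩
end

section
/- The closure in the Bing space B of a basic set U_c,ε = {(y,0) ∈ B : |y - c| ≤ ε} (for c ∈ ℚ + √3ℚ, ε > 0) contains every point (a,b) ∈ B with min(|c - (a - b/√3)|, |c - (a + b/√3)|) ≤ ε. -/
lemma bing_aux (t c δ ε : ℝ) (hδ : 0 < δ) (hε : 0 < ε) (ht : |c - t| ≤ ε) :
    ∃ x : ℚ, |(x : ℝ) - t| < δ ∧ |(x : ℝ) - c| ≤ ε := by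
  obtain ⟨ha, hb⟩ := abs_le.1 ht
  have h : max (t - δ) (c - ε) < min (t + δ) (c + ε) := by
    simp only [max_lt_iff, lt_min_iff]
    constructor <;> constructor <;> linarith
  obtain ⟨x, hx1, hx2⟩ := exists_rat_btwn h
  obtain ⟨h1, h2⟩ := max_lt_iff.1 hx1
  obtain ⟨h3, h4⟩ := lt_min_iff.1 hx2
  exact ⟨x, abs_lt.2 ⟨by linarith, by linarith⟩, abs_le.2 ⟨by linarith, by linarith⟩⟩

/-- The closure in the Bing space of the basic set `{(y,0) : |y - c| ≤ ε}`
(for `c ∈ ℚ + √3·ℚ`, `ε > 0`) contains every point `(a,b)` with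
`min (|c - (a - b/√3)|) (|c - (a + b/√3)|) ≤ ε`. -/
theorem bing_closure_basic (c : ℝ) (hc : ∃ p q : ℚ, c = (p : ℝ) + Real.sqrt 3 * q)
    (ε : ℝ) (hε : 0 < ε) (z : BingPt)
    (hz : min (|c - ((z.x : ℝ) - (z.y : ℝ) / Real.sqrt 3)|)
        (|c - ((z.x : ℝ) + (z.y : ℝ) / Real.sqrt 3)|) ≤ ε) :
    z ∈ closure {w : BingPt | w.y = 0 ∧ |(w.x : ℝ) - c| ≤ ε} := by
  rw [mem_closure_iff]
  intro o ho hzo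
  obtain ⟨δ, hδ, hsub⟩ := ho z hzo
  rcases min_le_iff.1 hz with ht | ht
  · obtain ⟨x, hx1, hx2⟩ := bing_aux ((z.x : ℝ) - (z.y : ℝ) / Real.sqrt 3) c δ ε hδ hε ht
    exact ⟨⟨x, 0, le_refl 0⟩, hsub ⟨rfl, Or.inl hx1⟩, rfl, hx2⟩
  · obtain ⟨x, hx1, hx2⟩ := bing_aux ((z.x : ℝ) + (z.y : ℝ) / Real.sqrt 3) c δ ε hδ hε ht
    exact ⟨⟨x, 0, le_refl 0⟩, hsub ⟨rfl, Or.inr hx1⟩, rfl, hx2⟩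
end

section
/- If 𝒰 is a disjoint cover of ℚ + √3·ℚ, then the family 𝒰^◇ = {U ◇ V : U, V ∈ 𝒰}, where U ◇ V = {z ∈ B : z_± ⊆ U ∪ V, z_± ∩ U ≠ ∅, z_± ∩ V ≠ ∅} and z_± = {pr₋(z), pr₊(z)}, is a disjoint cover of the Bing space B. -/
/-- The set `ℚ + √3·ℚ` as a subtype of `ℝ` (with the subspace topology). -/
abbrev Qs3 : Type := {x : ℝ // ∃ p q : ℚ, x = (p : ℝ) + Real.sqrt 3 * q}

/-- A set `C ⊆ ℚ + √3·ℚ` is order-convex if it contains every point of `ℚ + √3·ℚ`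
lying between two of its points. -/
def OrdConvex (C : Set Qs3) : Prop :=
  ∀ u ∈ C, ∀ v ∈ C, ∀ t : Qs3, (u : ℝ) ≤ t → (t : ℝ) ≤ v → t ∈ C

/-- The projection `pr₋(x,y) = x - √3·y` from the Bing space into `ℚ + √3·ℚ`. -/
noncomputable def prm (z : BingPt) : Qs3 :=
  ⟨(z.x : ℝ) - Real.sqrt 3 * z.y, ⟨z.x, -z.y, by push_cast; ring⟩⟩

/-- The projection `pr₊(x,y) = x + √3·y` from the Bing space into `ℚ + √3·ℚ`. -/
noncomputable def prp (z : BingPt) : Qs3 :=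
  ⟨(z.x : ℝ) + Real.sqrt 3 * z.y, ⟨z.x, z.y, by rfl⟩⟩

/-- `z_± = {pr₋ z, pr₊ z}`. -/
def zpm (z : BingPt) : Set Qs3 := {prm z, prp z}

/-- `U ◇ V`: points of the Bing space whose pair `z_±` lies in `U ∪ V` and meets
both `U` and `V`. -/
def diamond (U V : Set Qs3) : Set BingPt :=
  {z : BingPt | zpm z ⊆ U ∪ V ∧ (zpm z ∩ U).Nonempty ∧ (zpm z ∩ V).Nonempty}


lemma diamond_comm (U V : Set Qs3) : diamond U V = diamond V U := by
  ext z
  constructor <;> rintro ⟨h1, h2, h3⟩ <;> exact ⟨by rwa [Set.union_comm], h3, h2⟩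

lemma mem_diamond_cases {U V : Set Qs3} {z : BingPt} (h : z ∈ diamond U V) :
    (prm z ∈ U ∧ prp z ∈ V) ∨ (prm z ∈ V ∧ prp z ∈ U) := by
  obtain ⟨h1, ⟨a, haz, haU⟩, ⟨b, hbz, hbV⟩⟩ := h
  have hm : prm z ∈ U ∪ V := h1 (Set.mem_insert _ _)
  have hp : prp z ∈ U ∪ V := h1 (Set.mem_insert_of_mem _ rfl)
  simp only [zpm, Set.mem_insert_iff, Set.mem_singleton_iff] at haz hbz
  rcases haz with rfl | rfl <;> rcases hbz with rfl | rfl <;>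
    rcases hm with hm | hm <;> rcases hp with hp | hp <;> tauto

/-- A disjoint cover `𝒰` of `ℚ + √3·ℚ` induces the disjoint cover
`𝒰^◇ = {U ◇ V : U, V ∈ 𝒰}` of the Bing space. -/
theorem diamond_disjoint_cover (𝒰 : Set (Set Qs3))
    (hdisj : 𝒰.PairwiseDisjoint id) (hcov : ⋃₀ 𝒰 = Set.univ) :
    ({S : Set BingPt | ∃ U ∈ 𝒰, ∃ V ∈ 𝒰, S = diamond U V}).PairwiseDisjoint id ∧
    ⋃₀ {S : Set BingPt | ∃ U ∈ 𝒰, ∃ V ∈ 𝒰, S = diamond U V} = Set.univ := by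
  have uniq : ∀ x : Qs3, ∀ U ∈ 𝒰, ∀ V ∈ 𝒰, x ∈ U → x ∈ V → U = V := by
    intro x U hU V hV hxU hxV
    by_contra h
    exact Set.disjoint_left.mp (hdisj hU hV h) hxU hxV
  constructor
  · intro S hS S' hS' hne
    obtain ⟨U, hU, V, hV, rfl⟩ := hS
    obtain ⟨U', hU', V', hV', rfl⟩ := hS'
    refine Set.disjoint_left.mpr fun z hz hz' => hne ?_
    rcases mem_diamond_cases hz with ⟨h1, h2⟩ | ⟨h1, h2⟩ <;>
      rcases mem_diamond_cases hz' with ⟨h1', h2'⟩ | ⟨h1', h2'⟩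
    · rw [uniq _ U hU U' hU' h1 h1', uniq _ V hV V' hV' h2 h2']
    · rw [uniq _ U hU V' hV' h1 h1', uniq _ V hV U' hU' h2 h2', diamond_comm]
    · rw [uniq _ U hU V' hV' h2 h2', uniq _ V hV U' hU' h1 h1', diamond_comm]
    · rw [uniq _ U hU U' hU' h2 h2', uniq _ V hV V' hV' h1 h1']
  · ext z
    simp only [Set.mem_univ, iff_true, Set.mem_sUnion]
    have hm : prm z ∈ ⋃₀ 𝒰 := by rw [hcov]; trivial
    have hp : prp z ∈ ⋃₀ 𝒰 := by rw [hcov]; trivial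
    obtain ⟨U, hU, hmU⟩ := hm
    obtain ⟨V, hV, hpV⟩ := hp
    refine ⟨diamond U V, ⟨U, hU, V, hV, rfl⟩, ?_, ⟨prm z, Set.mem_insert _ _, hmU⟩,
      ⟨prp z, Set.mem_insert_of_mem _ rfl, hpV⟩⟩
    intro w hw
    simp only [zpm, Set.mem_insert_iff, Set.mem_singleton_iff] at hw
    rcases hw with rfl | rfl
    · exact Or.inl hmU
    · exact Or.inr hpV
end
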